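/- Let k ≥ 100 be an integer, let X_1, …, X_k be independent random variables each distributed as Bernoulli(1/2), let S := X_1 + ⋯ + X_k, and let γ be a real number with 2 ≤ γ ≤ 2^{k/4}. Then Pr[ S > k/2 + 0.1·√(k·log γ) ] ≥ 0.1/γ. -/

import Mathlib

lemma card_cnt_eq (k j : ℕ) :
    ((Finset.univ : Finset (Fin k → Bool)).filter
      (fun X => (Finset.univ.filter fun i => X i = true).card = j)).card = k.choose j := by
  have : k.choose j = (Finset.powersetCard j (Finset.univ : Finset (Fin k))).card := by
    rw [Finset.card_powersetCard, Finset.card_univ, Fintype.card_fin]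
  rw [this]
  apply Finset.card_bij (fun X _ => Finset.univ.filter fun i => X i = true)
  · intro X hX
    simp only [Finset.mem_filter, Finset.mem_univ, true_and] at hX
    simp [Finset.mem_powersetCard, hX]
  · intro X hX Y hY h
    funext i
    have := Finset.ext_iff.mp h i
    simp only [Finset.mem_filter, Finset.mem_univ, true_and] at this
    cases hXi : X i <;> cases hYi : Y i <;> simp [hXi, hYi] at this ⊢
  · intro s hs
    refine ⟨fun i => i ∈ s, ?_, ?_⟩
    · simp only [Finset.mem_powersetCard] at hs
      simp [hs.2]
    · ext i; simp

lemma sixteen_pow_le (m : ℕ) (hm : 1 ≤ m) :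
    16 ^ m ≤ 4 * m * (Nat.centralBinom m) ^ 2 := by
  induction m with
  | zero => omega
  | succ n ih =>
    rcases Nat.eq_or_lt_of_le hm with h | h
    · rw [← h]; decide
    · have hn : 1 ≤ n := by omega
      have ihn := ih hn
      set A := Nat.centralBinom n with hA
      set B := Nat.centralBinom (n+1) with hB
      have key : (n + 1) * B = 2 * (2 * n + 1) * A := Nat.succ_mul_centralBinom_succ n
      refine Nat.le_of_mul_le_mul_left ?_ (show 0 < n * (n+1)^2 by positivity)
      calc n * (n+1)^2 * 16 ^ (n+1) = 16 ^ n * (16 * n * (n+1)^2) := by ring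
        _ ≤ (4 * n * A^2) * (16 * n * (n+1)^2) := Nat.mul_le_mul_right _ ihn
        _ = (4*n*(n+1)) * (16 * n * (n+1)) * A^2 := by ring
        _ ≤ ((2*n+1)^2) * (16 * n * (n+1)) * A^2 := by
            apply Nat.mul_le_mul_right
            apply Nat.mul_le_mul_right
            nlinarith
        _ = 4 * n * (n+1) * ((2*(2*n+1)*A)^2) := by ring
        _ = 4 * n * (n+1) * (((n+1)*B)^2) := by rw [key]
        _ = n * (n+1)^2 * (4 * (n+1) * B^2) := by ring

lemma four_pow_le_sqrt (m : ℕ) (hm : 1 ≤ m) :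
    (4:ℝ) ^ m ≤ Real.sqrt (4 * m) * (Nat.centralBinom m : ℝ) := by
  have h := sixteen_pow_le m hm
  have hr : ((16:ℝ)) ^ m ≤ 4 * m * (Nat.centralBinom m : ℝ) ^ 2 := by exact_mod_cast h
  have h1 : (4:ℝ) ^ m = Real.sqrt ((16:ℝ) ^ m) := by
    rw [show ((16:ℝ)) = 4^2 by norm_num, ← pow_mul, mul_comm 2 m, pow_mul,
      Real.sqrt_sq (by positivity)]
  rw [h1]
  calc Real.sqrt ((16:ℝ)^m) ≤ Real.sqrt (4 * m * (Nat.centralBinom m : ℝ)^2) :=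
        Real.sqrt_le_sqrt hr
    _ = Real.sqrt (4*m) * (Nat.centralBinom m : ℝ) := by
        rw [Real.sqrt_mul (by positivity), Real.sqrt_sq (by positivity)]

lemma central_lower (k : ℕ) (hk : 2 ≤ k) :
    (2:ℝ) ^ k ≤ Real.sqrt (2 * k + 2) * (k.choose (k / 2) : ℝ) := by
  rcases Nat.even_or_odd k with ⟨m, hm⟩ | ⟨m, hm⟩
  · have hm1 : 1 ≤ m := by omega
    have h := four_pow_le_sqrt m hm1
    have e1 : k / 2 = m := by omega
    have e2 : Nat.centralBinom m = k.choose m := by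
      rw [Nat.centralBinom_eq_two_mul_choose]; congr 1; omega
    have e3 : (2:ℝ)^k = 4^m := by
      rw [show k = 2*m by omega, pow_mul]; norm_num
    rw [e1, e3]
    rw [e2] at h
    refine h.trans (mul_le_mul_of_nonneg_right ?_ (by positivity))
    apply Real.sqrt_le_sqrt
    have : (k:ℝ) = 2*m := by push_cast [hm]; ring
    rw [this]; nlinarith
  · have hm1 : 1 ≤ m := by omega
    have h := four_pow_le_sqrt (m+1) (by omega)
    have e2 : Nat.centralBinom (m+1) = 2 * k.choose m := by
      rw [Nat.centralBinom_eq_two_mul_choose,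
        show 2*(m+1) = (2*m+1) + 1 by ring, Nat.choose_succ_succ,
        Nat.choose_symm_half, show 2*m+1 = k by omega]
      ring
    have e1 : k / 2 = m := by omega
    rw [e1]
    have e3 : (2:ℝ)^k = 2 * 4^m := by
      rw [show k = 2*m+1 by omega, pow_succ', pow_mul]; norm_num
    rw [e3]
    have e4 : Real.sqrt (4 * ((m:ℝ)+1)) = Real.sqrt (2*k+2) := by
      congr 1; push_cast [show k = 2*m+1 by omega]; ring
    rw [e2, pow_succ] at h
    push_cast at h
    rw [e4] at h
    nlinarith [h]

lemma choose_mono_left (k j j' : ℕ) (h1 : j ≤ j') (h2 : j' ≤ k / 2) :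
    k.choose j ≤ k.choose j' := by
  induction j' , h1 using Nat.le_induction with
  | base => rfl
  | succ i hi ih =>
      exact (ih (by omega)).trans (Nat.choose_le_succ_of_lt_half_left (by omega))

lemma choose_anti_right (k a b : ℕ) (hka : k ≤ 2 * a) (hab : a ≤ b) (hbk : b ≤ k) :
    k.choose b ≤ k.choose a := by
  have ha : a ≤ k := le_trans hab hbk
  rw [← Nat.choose_symm hbk, ← Nat.choose_symm ha]
  exact choose_mono_left k (k - b) (k - a) (by omega) (by omega)

lemma ratio_lower (k m s : ℕ) (hk : 2 * m ≤ k) (hs : s ≤ m) :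
    (((m:ℝ) - s) / ((m:ℝ) + s)) ^ s * (k.choose m : ℝ) ≤ (k.choose (m + s) : ℝ) := by
  induction s with
  | zero => simp
  | succ s ih =>
    have hsm : s + 1 ≤ m := hs
    have hs' : s ≤ m := by omega
    have ihs := ih hs'
    have hm1 : (1:ℝ) ≤ m := by exact_mod_cast Nat.one_le_iff_ne_zero.mpr (by omega)
    have hsr : ((s:ℝ)) + 1 ≤ m := by exact_mod_cast hsm
    have hkr : 2 * (m:ℝ) ≤ k := by exact_mod_cast hk
    have hden : (0:ℝ) < (m:ℝ) + s := by positivity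
    have hden2 : (0:ℝ) < (m:ℝ) + s + 1 := by positivity
    have hnum : (0:ℝ) ≤ (m:ℝ) - s - 1 := by linarith
    have hrec : (k.choose (m + s + 1) : ℝ) * ((m:ℝ) + s + 1)
        = (k.choose (m + s) : ℝ) * ((k:ℝ) - m - s) := by
      have h := Nat.choose_succ_right_eq k (m + s)
      have hle : m + s ≤ k := by omega
      have h2 := congrArg (fun x : ℕ => (x:ℝ)) h
      push_cast [Nat.cast_sub hle] at h2
      push_cast
      linarith [h2]
    have hCs : (0:ℝ) ≤ (k.choose (m+s) : ℝ) := by positivity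
    have hCm : (0:ℝ) ≤ (k.choose m : ℝ) := by positivity
    have hstep : (k.choose (m+s) : ℝ) * (((m:ℝ) - s - 1) / ((m:ℝ) + s + 1))
        ≤ (k.choose (m + s + 1) : ℝ) := by
      rw [mul_div_assoc'] at *
      rw [div_le_iff₀ hden2]
      have : (k.choose (m+s) : ℝ) * ((m:ℝ) - s - 1) ≤ (k.choose (m+s) : ℝ) * ((k:ℝ) - m - s) :=
        mul_le_mul_of_nonneg_left (by linarith) hCs
      linarith [hrec]
    have hrle : ((m:ℝ) - s - 1)/((m:ℝ)+s+1) ≤ ((m:ℝ)-s)/((m:ℝ)+s) := by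
      rw [div_le_div_iff₀ hden2 hden]; nlinarith
    have h0 : (0:ℝ) ≤ ((m:ℝ)-s-1)/((m:ℝ)+s+1) := div_nonneg hnum (le_of_lt hden2)
    push_cast
    calc (((m:ℝ) - ((s:ℝ)+1)) / ((m:ℝ) + ((s:ℝ)+1))) ^ (s+1) * (k.choose m : ℝ)
        = (((m:ℝ)-s-1)/((m:ℝ)+s+1))^s * ((((m:ℝ)-s-1)/((m:ℝ)+s+1)) * (k.choose m : ℝ)) := by
          ring
      _ ≤ (((m:ℝ)-s)/((m:ℝ)+s))^s * ((((m:ℝ)-s-1)/((m:ℝ)+s+1)) * (k.choose m : ℝ)) :=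
          mul_le_mul_of_nonneg_right (pow_le_pow_left₀ h0 hrle s) (mul_nonneg h0 hCm)
      _ = (((m:ℝ)-s)/((m:ℝ)+s))^s * (k.choose m:ℝ) * (((m:ℝ)-s-1)/((m:ℝ)+s+1)) := by ring
      _ ≤ (k.choose (m+s) : ℝ) * (((m:ℝ)-s-1)/((m:ℝ)+s+1)) := mul_le_mul_of_nonneg_right ihs h0
      _ ≤ (k.choose (m+s+1) : ℝ) := hstep

lemma count_lower (k a w : ℕ) (thr : ℝ) (ha : thr < a) (hka : k ≤ 2 * a)
    (hw : 1 ≤ w) (hb : a + w ≤ k + 1) :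
    w * k.choose (a + w - 1) ≤ ((Finset.univ : Finset (Fin k → Bool)).filter
      (fun X => thr < ((Finset.univ.filter fun i => X i = true).card : ℝ))).card := by
  classical
  set cnt : (Fin k → Bool) → ℕ := fun X => (Finset.univ.filter fun i => X i = true).card with hcnt
  have hsub : (Finset.Ico a (a+w)).biUnion
      (fun j => (Finset.univ : Finset (Fin k → Bool)).filter (fun X => cnt X = j))
      ⊆ (Finset.univ : Finset (Fin k → Bool)).filter (fun X => thr < (cnt X : ℝ)) := by
    intro X hX
    simp only [Finset.mem_biUnion, Finset.mem_Ico, Finset.mem_filter, Finset.mem_univ,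
      true_and] at hX ⊢
    obtain ⟨j, ⟨hj1, hj2⟩, hj3⟩ := hX
    have : (a:ℝ) ≤ (cnt X : ℝ) := by rw [hj3]; exact_mod_cast hj1
    linarith
  refine le_trans ?_ (Finset.card_le_card hsub)
  rw [Finset.card_biUnion]
  · have hbound : ∀ j ∈ Finset.Ico a (a+w), k.choose (a + w - 1) ≤
        ((Finset.univ : Finset (Fin k → Bool)).filter (fun X => cnt X = j)).card := by
      intro j hj
      rw [card_cnt_eq]
      simp only [Finset.mem_Ico] at hj
      exact choose_anti_right k j (a+w-1) (by omega) (by omega) (by omega)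
    calc w * k.choose (a+w-1) = (Finset.Ico a (a+w)).card * k.choose (a+w-1) := by
          rw [Nat.card_Ico, Nat.add_sub_cancel_left]
      _ ≤ _ := Finset.card_nsmul_le_sum _ _ _ hbound
  · intro x hx y hy hxy
    simp only [Finset.disjoint_left, Finset.mem_filter, Finset.mem_univ, true_and]
    intro X h1 h2
    exact hxy (by omega)

lemma exp_le_ratio (m s : ℕ) (hs : (s:ℝ) < m) :
    Real.exp (-(2 * (s:ℝ)^2 / ((m:ℝ) - s))) ≤ (((m:ℝ) - s) / ((m:ℝ) + s)) ^ s := by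
  have hms : (0:ℝ) < (m:ℝ) - s := by linarith
  have hsnn : (0:ℝ) ≤ (s:ℝ) := Nat.cast_nonneg s
  have hps : (0:ℝ) < (m:ℝ) + s := by linarith
  have h1 : Real.exp (-(2 * (s:ℝ) / ((m:ℝ) - s))) ≤ ((m:ℝ) - s) / ((m:ℝ) + s) := by
    have h2 : 1 + 2 * (s:ℝ) / ((m:ℝ) - s) ≤ Real.exp (2 * (s:ℝ) / ((m:ℝ) - s)) := by
      linarith [Real.add_one_le_exp (2 * (s:ℝ) / ((m:ℝ) - s))]
    have h3 : ((m:ℝ) + s) / ((m:ℝ) - s) = 1 + 2 * (s:ℝ) / ((m:ℝ) - s) := by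
      field_simp; ring
    rw [Real.exp_neg]
    rw [inv_le_comm₀ (Real.exp_pos _) (by positivity)]
    rw [inv_div]
    rw [h3]
    exact h2
  calc Real.exp (-(2 * (s:ℝ)^2 / ((m:ℝ) - s)))
      = Real.exp (-(2 * (s:ℝ) / ((m:ℝ) - s))) ^ s := by
        rw [← Real.exp_nat_mul]; congr 1; ring
    _ ≤ (((m:ℝ) - s) / ((m:ℝ) + s)) ^ s :=
        pow_le_pow_left₀ (le_of_lt (Real.exp_pos _)) h1 s

lemma key_chain (k m s W : ℕ) (γ : ℝ) (hγ : 0 < γ) (hm : m = k/2) (hk2 : 2 ≤ k)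
    (hsm : (s:ℝ) < m)
    (hAI : 0.1 * Real.sqrt (2*(k:ℝ)+2) ≤ (W:ℝ) * γ * Real.exp (-(2 * (s:ℝ)^2 / ((m:ℝ) - s)))) :
    0.1 / γ * 2^k ≤ (W:ℝ) * (k.choose (m + s) : ℝ) := by
  have hsmn : s ≤ m := le_of_lt (by exact_mod_cast hsm)
  have h2m : 2*m ≤ k := by omega
  have hsqpos : (0:ℝ) < Real.sqrt (2*(k:ℝ)+2) := Real.sqrt_pos.mpr (by positivity)
  have hcentral := central_lower k hk2
  rw [← hm] at hcentral
  have hratio := ratio_lower k m s h2m hsmn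
  have hexp := exp_le_ratio m s hsm
  have h2k : (0:ℝ) < 2^k := by positivity
  have hCm : (2:ℝ)^k / Real.sqrt (2*(k:ℝ)+2) ≤ (k.choose m : ℝ) := by
    rw [div_le_iff₀ hsqpos]
    calc (2:ℝ)^k ≤ Real.sqrt (2*(k:ℝ)+2) * (k.choose m : ℝ) := by
          convert hcentral using 3 <;> push_cast <;> ring
      _ = (k.choose m : ℝ) * Real.sqrt (2*(k:ℝ)+2) := by ring
  have hC : Real.exp (-(2 * (s:ℝ)^2 / ((m:ℝ) - s))) * ((2:ℝ)^k / Real.sqrt (2*(k:ℝ)+2))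
      ≤ (k.choose (m+s) : ℝ) := by
    have hrat0 : (0:ℝ) ≤ (((m:ℝ) - s) / ((m:ℝ) + s)) ^ s :=
      pow_nonneg (div_nonneg (by linarith) (by positivity)) s
    calc Real.exp (-(2 * (s:ℝ)^2 / ((m:ℝ) - s))) * ((2:ℝ)^k / Real.sqrt (2*(k:ℝ)+2))
        ≤ (((m:ℝ) - s) / ((m:ℝ) + s)) ^ s * (k.choose m : ℝ) :=
          mul_le_mul hexp hCm (by positivity) hrat0
      _ ≤ (k.choose (m+s) : ℝ) := hratio
  rw [div_mul_eq_mul_div, div_le_iff₀ hγ]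
  have step1 : (0.1:ℝ) * 2^k ≤ (W:ℝ) * γ * Real.exp (-(2 * (s:ℝ)^2 / ((m:ℝ) - s)))
      * (2^k / Real.sqrt (2*(k:ℝ)+2)) := by
    have hmul := mul_le_mul_of_nonneg_right hAI (le_of_lt (div_pos h2k hsqpos))
    calc (0.1:ℝ)*2^k = 0.1 * Real.sqrt (2*(k:ℝ)+2) * (2^k / Real.sqrt (2*(k:ℝ)+2)) := by
          field_simp
      _ ≤ _ := hmul
  calc (0.1:ℝ) * 2^k ≤ (W:ℝ) * γ * Real.exp (-(2 * (s:ℝ)^2 / ((m:ℝ) - s)))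
        * (2^k / Real.sqrt (2*(k:ℝ)+2)) := step1
    _ = ((W:ℝ) * γ) * (Real.exp (-(2 * (s:ℝ)^2 / ((m:ℝ) - s)))
        * (2^k / Real.sqrt (2*(k:ℝ)+2))) := by ring
    _ ≤ ((W:ℝ) * γ) * (k.choose (m+s) : ℝ) :=
        mul_le_mul_of_nonneg_left hC (by positivity)
    _ = (W:ℝ) * (k.choose (m+s) : ℝ) * γ := by ring

lemma AI_of_log (k W : ℕ) (γ x : ℝ) (hγ : 0 < γ) (hW : 0 < W)
    (h : Real.log (2*(k:ℝ)+2) / 2 ≤ Real.log 10 + Real.log W + Real.log γ + x) :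
    0.1 * Real.sqrt (2*(k:ℝ)+2) ≤ (W:ℝ) * γ * Real.exp x := by
  have hpos : (0:ℝ) < 2*(k:ℝ)+2 := by positivity
  have h1 : Real.sqrt (2*(k:ℝ)+2) = Real.exp (Real.log (2*(k:ℝ)+2) / 2) := by
    rw [Real.sqrt_eq_rpow, Real.rpow_def_of_pos hpos]
    congr 1
    ring
  have h01 : (0.1:ℝ) = Real.exp (-(Real.log 10)) := by
    rw [Real.exp_neg, Real.exp_log (by norm_num)]; norm_num
  have hWpos : (0:ℝ) < (W:ℝ) := by exact_mod_cast hW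
  have hWe : (W:ℝ) = Real.exp (Real.log W) := (Real.exp_log hWpos).symm
  have hγe : γ = Real.exp (Real.log γ) := (Real.exp_log hγ).symm
  calc 0.1 * Real.sqrt (2*(k:ℝ)+2) = Real.exp (-(Real.log 10) + Real.log (2*(k:ℝ)+2)/2) := by
        rw [h01, h1, Real.exp_add]
    _ ≤ Real.exp (Real.log W + Real.log γ + x) := Real.exp_le_exp.mpr (by linarith)
    _ = (W:ℝ) * γ * Real.exp x := by
        rw [Real.exp_add, Real.exp_add, ← hWe, ← hγe]

lemma log_le_of_pow (x : ℝ) (p q : ℕ) (hx : 1 ≤ x) (hq : 0 < q) (h : x^q ≤ 2^p) :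
    Real.log x ≤ (p : ℝ)/q * Real.log 2 := by
  have h1 : Real.log (x^q) ≤ Real.log ((2:ℝ)^p) :=
    Real.log_le_log (by positivity) h
  rw [Real.log_pow, Real.log_pow] at h1
  have hq' : (0:ℝ) < q := by exact_mod_cast hq
  rw [div_mul_eq_mul_div, le_div_iff₀ hq']
  push_cast at h1 ⊢
  linarith

lemma log_ge_of_pow (x : ℝ) (p q : ℕ) (hx : 0 < x) (hq : 0 < q) (h : (2:ℝ)^p ≤ x^q) :
    (p : ℝ)/q * Real.log 2 ≤ Real.log x := by
  have h1 : Real.log ((2:ℝ)^p) ≤ Real.log (x^q) :=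
    Real.log_le_log (by positivity) h
  rw [Real.log_pow, Real.log_pow] at h1
  have hq' : (0:ℝ) < q := by exact_mod_cast hq
  rw [div_mul_eq_mul_div, div_le_iff₀ hq']
  push_cast at h1 ⊢
  linarith

lemma log10_ge : (2.3022:ℝ) ≤ Real.log 10 := by
  have h := log_ge_of_pow 10 93 28 (by norm_num) (by norm_num) (by norm_num)
  have := Real.log_two_gt_d9
  nlinarith

lemma log3_ge : (1.0974:ℝ) ≤ Real.log 3 := by
  have h := log_ge_of_pow 3 19 12 (by norm_num) (by norm_num) (by norm_num)
  have := Real.log_two_gt_d9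
  nlinarith

lemma combin (k n W : ℕ) (hk : 100 ≤ k) (γ : ℝ) (hγ0 : 0 < γ) (hW : 1 ≤ W) (t : ℝ)
    (htn : t < n) (hsk : ((n + W : ℕ):ℝ) ≤ 0.1551 * k)
    (hAI : 0.1 * Real.sqrt (2*(k:ℝ)+2) ≤
      (W:ℝ) * γ * Real.exp (-(2 * ((n+W : ℕ):ℝ)^2 / ((((k/2 : ℕ)):ℝ) - ((n+W : ℕ):ℝ))))) :
    0.1 / γ ≤
      ((Set.ncard {X : Fin k → Bool | (k:ℝ)/2 + t <
        ((Finset.univ.filter fun i => X i = true).card : ℝ)}) : ℝ) / 2 ^ k := by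
  classical
  set m : ℕ := k / 2 with hm
  set s : ℕ := n + W with hs
  have h2m : 2 * m ≤ k := by omega
  have h2m1 : k ≤ 2 * m + 1 := by omega
  have hkr : (100:ℝ) ≤ k := by exact_mod_cast hk
  have hmr : ((k:ℝ) - 1)/2 ≤ (m:ℝ) := by
    have : (k:ℝ) ≤ 2*(m:ℝ)+1 := by exact_mod_cast h2m1
    linarith
  have hsm : (s:ℝ) < (m:ℝ) := by
    have : (0.1551:ℝ) * k < ((k:ℝ)-1)/2 := by linarith
    linarith [hsk]
  have hsmn : s ≤ m := le_of_lt (by exact_mod_cast hsm)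
  have hchain := key_chain k m s W γ hγ0 hm (by omega) hsm hAI
  -- counting
  have ha : (k:ℝ)/2 + t < ((m + n + 1 : ℕ):ℝ) := by
    have h1 : (k:ℝ)/2 ≤ (m:ℝ) + 1/2 := by linarith
    push_cast
    linarith
  have hka : k ≤ 2 * (m + n + 1) := by omega
  have hb : (m + n + 1) + W ≤ k + 1 := by omega
  have hidx : m + n + 1 + W - 1 = m + s := by rw [hs]; omega
  have hcount := count_lower k (m + n + 1) W ((k:ℝ)/2 + t) ha hka hW hb
  rw [hidx] at hcount
  have hset : {X : Fin k → Bool | (k:ℝ)/2 + t <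
      ((Finset.univ.filter fun i => X i = true).card : ℝ)}.ncard
      = ((Finset.univ : Finset (Fin k → Bool)).filter
        (fun X => (k:ℝ)/2 + t < ((Finset.univ.filter fun i => X i = true).card : ℝ))).card := by
    rw [← Set.ncard_coe_finset]
    congr 1
    ext X
    simp
  rw [hset]
  rw [le_div_iff₀ (by positivity : (0:ℝ) < (2:ℝ)^k)]
  calc (0.1:ℝ)/γ * 2^k ≤ (W:ℝ) * (k.choose (m + s) : ℝ) := hchain
    _ = ((W * k.choose (m+s) : ℕ) : ℝ) := by push_cast; ring
    _ ≤ _ := by exact_mod_cast hcount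

set_option maxHeartbeats 1000000 in
lemma AI_case1 (k : ℕ) (γ : ℝ) (hkr : (100:ℝ) ≤ k) (hγ0 : 0 < γ)
    (hmr : ((k:ℝ)-1)/2 ≤ ((k/2:ℕ):ℝ)) (hlogγ2 : Real.log 2 ≤ Real.log γ)
    (hkn2 : (k:ℝ) * Real.log γ < 100) :
    0.1 * Real.sqrt (2*(k:ℝ)+2) ≤ ((2:ℕ):ℝ) * γ *
      Real.exp (-(2 * ((1+2 : ℕ):ℝ)^2 / ((((k/2 : ℕ)):ℝ) - ((1+2 : ℕ):ℝ)))) := by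
  have hl2l : (0.6931471803:ℝ) < Real.log 2 := Real.log_two_gt_d9
  have hl2u : Real.log 2 < 0.6931471808 := Real.log_two_lt_d9
  have h10 := log10_ge
  have hklog : (k:ℝ) * 0.6931471803 ≤ (k:ℝ) * Real.log γ :=
    mul_le_mul_of_nonneg_left (by linarith) (by linarith)
  have hk144 : (k:ℝ) ≤ 144.28 := by linarith
  have hk144n : k ≤ 144 := by
    have h0 : (k:ℝ) < 145 := by linarith
    exact Nat.lt_succ_iff.mp (by exact_mod_cast h0)
  have hk144r : (k:ℝ) ≤ 144 := by exact_mod_cast hk144n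
  apply AI_of_log k 2 γ _ hγ0 (by norm_num)
  have hc3 : ((1+2:ℕ):ℝ) = 3 := by norm_num
  rw [hc3]
  have hc2 : ((2:ℕ):ℝ) = (2:ℝ) := by norm_num
  rw [hc2]
  have hden : (46.5:ℝ) ≤ ((k/2:ℕ):ℝ) - 3 := by linarith
  have hE : 2 * (3:ℝ)^2 / (((k/2:ℕ):ℝ) - 3) ≤ 0.3871 := by
    rw [div_le_iff₀ (by linarith)]
    linarith
  have h290 : Real.log (2*(k:ℝ)+2) ≤ 5.6839 := by
    have h1 : Real.log (2*(k:ℝ)+2) ≤ Real.log 290 :=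
      Real.log_le_log (by positivity) (by linarith)
    have h2 : Real.log 290 ≤ (41:ℝ)/5 * Real.log 2 :=
      log_le_of_pow 290 41 5 (by norm_num) (by norm_num) (by norm_num)
    nlinarith
  linarith

set_option maxHeartbeats 1000000 in
lemma AI_case2 (k : ℕ) (γ : ℝ) (hkr : (100:ℝ) ≤ k) (hγ0 : 0 < γ)
    (hmr : ((k:ℝ)-1)/2 ≤ ((k/2:ℕ):ℝ)) (hlogγ2 : Real.log 2 ≤ Real.log γ)
    (hkn2 : (k:ℝ) * Real.log γ < 400) (hL100 : (100:ℝ) ≤ (k:ℝ) * Real.log γ) :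
    0.1 * Real.sqrt (2*(k:ℝ)+2) ≤ ((3:ℕ):ℝ) * γ *
      Real.exp (-(2 * ((2+3 : ℕ):ℝ)^2 / ((((k/2 : ℕ)):ℝ) - ((2+3 : ℕ):ℝ)))) := by
  have hl2l : (0.6931471803:ℝ) < Real.log 2 := Real.log_two_gt_d9
  have hl2u : Real.log 2 < 0.6931471808 := Real.log_two_lt_d9
  have h10 := log10_ge
  have h3 := log3_ge
  have hklog : (k:ℝ) * 0.6931471803 ≤ (k:ℝ) * Real.log γ :=
    mul_le_mul_of_nonneg_left (by linarith) (by linarith)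
  have hk577 : (k:ℝ) ≤ 577.2 := by linarith
  apply AI_of_log k 3 γ _ hγ0 (by norm_num)
  have hc5 : ((2+3:ℕ):ℝ) = 5 := by norm_num
  rw [hc5]
  have hc3 : ((3:ℕ):ℝ) = (3:ℝ) := by norm_num
  rw [hc3]
  have hdenpos : (0:ℝ) < ((k/2:ℕ):ℝ) - 5 := by linarith
  have hE : 2 * (5:ℝ)^2 / (((k/2:ℕ):ℝ) - 5) ≤ 100 / ((k:ℝ) - 11) := by
    rw [div_le_div_iff₀ hdenpos (by linarith)]
    linarith
  rcases le_or_gt (k:ℝ) 144 with hka | hka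
  · have hLlb : 100 / (k:ℝ) ≤ Real.log γ := by
      rw [div_le_iff₀ (by linarith)]
      nlinarith
    have hquad : -(0.124:ℝ) ≤ 100/(k:ℝ) - 100/((k:ℝ)-11) := by
      rw [div_sub_div _ _ (by linarith : (k:ℝ) ≠ 0) (by linarith : (k:ℝ)-11 ≠ 0)]
      rw [neg_le, ← neg_div]
      rw [div_le_iff₀ (by nlinarith)]
      nlinarith [hkr]
    have h290 : Real.log (2*(k:ℝ)+2) ≤ 5.6839 := by
      have h1 : Real.log (2*(k:ℝ)+2) ≤ Real.log 290 :=
        Real.log_le_log (by positivity) (by linarith)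
      have h2 : Real.log 290 ≤ (41:ℝ)/5 * Real.log 2 :=
        log_le_of_pow 290 41 5 (by norm_num) (by norm_num) (by norm_num)
      nlinarith
    linarith
  · have hka' : (145:ℝ) ≤ k := by
      have h0 : 144 < k := by exact_mod_cast hka
      exact_mod_cast h0
    rcases le_or_gt (k:ℝ) 300 with hkb | hkb
    · have hE2 : 100 / ((k:ℝ) - 11) ≤ 0.74627 := by
        rw [div_le_iff₀ (by linarith)]; linarith
      have h602 : Real.log (2*(k:ℝ)+2) ≤ 6.41162 := by
        have h1 : Real.log (2*(k:ℝ)+2) ≤ Real.log 602 :=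
          Real.log_le_log (by positivity) (by linarith)
        have h2 : Real.log 602 ≤ (37:ℝ)/4 * Real.log 2 :=
          log_le_of_pow 602 37 4 (by norm_num) (by norm_num) (by norm_num)
        nlinarith
      linarith
    · have hkb' : (301:ℝ) ≤ k := by
        have h0 : 300 < k := by exact_mod_cast hkb
        exact_mod_cast h0
      have hk577n : k ≤ 577 := by
        have h0 : (k:ℝ) < 578 := by linarith
        exact Nat.lt_succ_iff.mp (by exact_mod_cast h0)
      have hkbr : (k:ℝ) ≤ 577 := by exact_mod_cast hk577n
      have hE2 : 100 / ((k:ℝ) - 11) ≤ 0.34483 := by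
        rw [div_le_iff₀ (by linarith)]; linarith
      have h1156 : Real.log (2*(k:ℝ)+2) ≤ 7.10476 := by
        have h1 : Real.log (2*(k:ℝ)+2) ≤ Real.log 1156 :=
          Real.log_le_log (by positivity) (by linarith)
        have h2 : Real.log 1156 ≤ (41:ℝ)/4 * Real.log 2 :=
          log_le_of_pow 1156 41 4 (by norm_num) (by norm_num) (by norm_num)
        nlinarith
      linarith

set_option maxHeartbeats 1000000 in
lemma AI_case3 (k : ℕ) (γ : ℝ) (hkr : (100:ℝ) ≤ k) (hγ0 : 0 < γ)
    (hmr : ((k:ℝ)-1)/2 ≤ ((k/2:ℕ):ℝ)) (hlogγ2 : Real.log 2 ≤ Real.log γ)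
    (hkn2 : (k:ℝ) * Real.log γ < 900) (hL400 : (400:ℝ) ≤ (k:ℝ) * Real.log γ) :
    0.1 * Real.sqrt (2*(k:ℝ)+2) ≤ ((4:ℕ):ℝ) * γ *
      Real.exp (-(2 * ((3+4 : ℕ):ℝ)^2 / ((((k/2 : ℕ)):ℝ) - ((3+4 : ℕ):ℝ)))) := by
  have hl2l : (0.6931471803:ℝ) < Real.log 2 := Real.log_two_gt_d9
  have hl2u : Real.log 2 < 0.6931471808 := Real.log_two_lt_d9
  have h10 := log10_ge
  have hklog : (k:ℝ) * 0.6931471803 ≤ (k:ℝ) * Real.log γ :=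
    mul_le_mul_of_nonneg_left (by linarith) (by linarith)
  have hk1298 : (k:ℝ) ≤ 1298.5 := by linarith
  have hLlb : 400 / (k:ℝ) ≤ Real.log γ := by
    rw [div_le_iff₀ (by linarith)]
    nlinarith
  apply AI_of_log k 4 γ _ hγ0 (by norm_num)
  have hc7 : ((3+4:ℕ):ℝ) = 7 := by norm_num
  rw [hc7]
  have hlog4 : Real.log ((4:ℕ):ℝ) = 2 * Real.log 2 := by
    rw [show ((4:ℕ):ℝ) = (2:ℝ)^2 by norm_num, Real.log_pow]
    push_cast; ring
  rw [hlog4]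
  have hdenpos : (0:ℝ) < ((k/2:ℕ):ℝ) - 7 := by linarith
  have hE : 2 * (7:ℝ)^2 / (((k/2:ℕ):ℝ) - 7) ≤ 196 / ((k:ℝ) - 15) := by
    rw [div_le_div_iff₀ hdenpos (by linarith)]
    linarith
  have hne0 : (k:ℝ) ≠ 0 := by linarith
  have hne15 : (k:ℝ) - 15 ≠ 0 := by linarith
  have e1 : 400/(k:ℝ) - 196/((k:ℝ)-15) = (204*(k:ℝ) - 6000)/((k:ℝ)*((k:ℝ)-15)) := by
    field_simp
    ring
  have hprod : (0:ℝ) < (k:ℝ)*((k:ℝ)-15) := by nlinarith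
  rcases le_or_gt k 300 with hka | hka
  · have hkar : (k:ℝ) ≤ 300 := by exact_mod_cast hka
    have hquad : (0.56:ℝ) ≤ 400/(k:ℝ) - 196/((k:ℝ)-15) := by
      rw [e1, le_div_iff₀ hprod]
      nlinarith [mul_nonneg (sub_nonneg.mpr hkr) (sub_nonneg.mpr hkar)]
    have h602 : Real.log (2*(k:ℝ)+2) ≤ 6.41162 := by
      have h1 : Real.log (2*(k:ℝ)+2) ≤ Real.log 602 :=
        Real.log_le_log (by positivity) (by linarith)
      have h2 : Real.log 602 ≤ (37:ℝ)/4 * Real.log 2 :=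
        log_le_of_pow 602 37 4 (by norm_num) (by norm_num) (by norm_num)
      nlinarith
    linarith
  · have hkar : (301:ℝ) ≤ (k:ℝ) := by exact_mod_cast hka
    rcases le_or_gt k 577 with hkb | hkb
    · have hkbr : (k:ℝ) ≤ 577 := by exact_mod_cast hkb
      have hquad : (0.33:ℝ) ≤ 400/(k:ℝ) - 196/((k:ℝ)-15) := by
        rw [e1, le_div_iff₀ hprod]
        nlinarith [mul_nonneg (sub_nonneg.mpr hkar) (sub_nonneg.mpr hkbr)]
      have h1156 : Real.log (2*(k:ℝ)+2) ≤ 7.10476 := by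
        have h1 : Real.log (2*(k:ℝ)+2) ≤ Real.log 1156 :=
          Real.log_le_log (by positivity) (by linarith)
        have h2 : Real.log 1156 ≤ (41:ℝ)/4 * Real.log 2 :=
          log_le_of_pow 1156 41 4 (by norm_num) (by norm_num) (by norm_num)
        nlinarith
      linarith
    · have hkbr : (578:ℝ) ≤ (k:ℝ) := by exact_mod_cast hkb
      rcases le_or_gt k 1000 with hkc | hkc
      · have hkcr : (k:ℝ) ≤ 1000 := by exact_mod_cast hkc
        have hE2 : 196 / ((k:ℝ) - 15) ≤ 0.34814 := by
          rw [div_le_iff₀ (by linarith)]; linarith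
        have h2002 : Real.log (2*(k:ℝ)+2) ≤ 7.62462 := by
          have h1 : Real.log (2*(k:ℝ)+2) ≤ Real.log 2002 :=
            Real.log_le_log (by positivity) (by linarith)
          have h2 := log_le_of_pow 2002 11 1 (by norm_num) (by norm_num) (by norm_num)
          norm_num at h2
          nlinarith
        linarith
      · have hkcr : (1001:ℝ) ≤ (k:ℝ) := by exact_mod_cast hkc
        have hk1298n : k ≤ 1298 := by
          have h0 : (k:ℝ) < 1299 := by linarith
          exact Nat.lt_succ_iff.mp (by exact_mod_cast h0)
        have hkdr : (k:ℝ) ≤ 1298 := by exact_mod_cast hk1298n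
        have hE2 : 196 / ((k:ℝ) - 15) ≤ 0.19879 := by
          rw [div_le_iff₀ (by linarith)]; linarith
        have h2598 : Real.log (2*(k:ℝ)+2) ≤ 7.90208 := by
          have h1 : Real.log (2*(k:ℝ)+2) ≤ Real.log 2598 :=
            Real.log_le_log (by positivity) (by linarith)
          have h2 : Real.log 2598 ≤ (57:ℝ)/5 * Real.log 2 :=
            log_le_of_pow 2598 57 5 (by norm_num) (by norm_num) (by norm_num)
          nlinarith
        linarith

set_option maxHeartbeats 1000000 in
lemma AI_case4 (k n : ℕ) (γ : ℝ) (hkr : (100:ℝ) ≤ k) (hγ0 : 0 < γ)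
    (hlogγ2 : Real.log 2 ≤ Real.log γ) (hn4 : 4 ≤ n)
    (hmr : ((k:ℝ)-1)/2 ≤ ((k/2:ℕ):ℝ)) (hnr : (4:ℝ) ≤ n)
    (hkn2 : (k:ℝ) * Real.log γ < 100 * (n:ℝ)^2)
    (hLlb' : 100*((n:ℝ)-1)^2 ≤ (k:ℝ) * Real.log γ)
    (hs3 : 3*(n:ℝ) ≤ 0.1551 * k) :
    0.1 * Real.sqrt (2*(k:ℝ)+2) ≤ ((2*n:ℕ):ℝ) * γ *
      Real.exp (-(2 * ((n+2*n : ℕ):ℝ)^2 / ((((k/2 : ℕ)):ℝ) - ((n+2*n : ℕ):ℝ)))) := by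
  have hl2l : (0.6931471803:ℝ) < Real.log 2 := Real.log_two_gt_d9
  have hl2u : Real.log 2 < 0.6931471808 := Real.log_two_lt_d9
  have h10 := log10_ge
  have hklog : (k:ℝ) * 0.6931471803 ≤ (k:ℝ) * Real.log γ :=
    mul_le_mul_of_nonneg_left (by linarith) (by linarith)
  have hklt : (k:ℝ) ≤ 144.28 * (n:ℝ)^2 := by linarith
  apply AI_of_log k (2*n) γ _ hγ0 (by omega)
  have hc3n : ((n+2*n:ℕ):ℝ) = 3*(n:ℝ) := by push_cast; ring
  rw [hc3n]
  have hnpos : (0:ℝ) < (n:ℝ) := by linarith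
  have hlogW : Real.log ((2*n:ℕ):ℝ) = Real.log 2 + Real.log (n:ℝ) := by
    rw [show ((2*n:ℕ):ℝ) = 2 * (n:ℝ) by push_cast; ring,
      Real.log_mul (by norm_num) (by linarith)]
  rw [hlogW]
  have hden : (0.3399:ℝ)*k ≤ ((k/2:ℕ):ℝ) - 3*(n:ℝ) := by linarith
  have hdenpos : (0:ℝ) < ((k/2:ℕ):ℝ) - 3*(n:ℝ) := by linarith
  have hLlb : 100*((n:ℝ)-1)^2/(k:ℝ) ≤ Real.log γ := by
    rw [div_le_iff₀ (by linarith)]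
    linarith
  have hE : 2 * (3*(n:ℝ))^2 / (((k/2:ℕ):ℝ) - 3*(n:ℝ)) ≤ 100*((n:ℝ)-1)^2/(k:ℝ) := by
    rw [div_le_div_iff₀ hdenpos (by linarith)]
    have key : 18*(n:ℝ)^2 ≤ 33.99*((n:ℝ)-1)^2 := by nlinarith [sq_nonneg ((n:ℝ)-4)]
    calc 2 * (3*(n:ℝ))^2 * (k:ℝ) = 18*(n:ℝ)^2 * k := by ring
      _ ≤ 33.99*((n:ℝ)-1)^2 * k := by nlinarith
      _ = 100*((n:ℝ)-1)^2 * (0.3399*(k:ℝ)) := by ring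
      _ ≤ 100*((n:ℝ)-1)^2 * (((k/2:ℕ):ℝ) - 3*(n:ℝ)) := by
          apply mul_le_mul_of_nonneg_left hden (by positivity)
  have hlog2k : Real.log (2*(k:ℝ)+2) ≤ Real.log (289*(n:ℝ)^2) := by
    apply Real.log_le_log (by positivity)
    nlinarith
  have hsplit : Real.log (289*(n:ℝ)^2) = Real.log 289 + 2*Real.log (n:ℝ) := by
    rw [Real.log_mul (by norm_num) (by positivity), Real.log_pow]
    push_cast; ring
  have h289 : Real.log 289 ≤ 5.6839 := by
    have h2 : Real.log 289 ≤ (41:ℝ)/5 * Real.log 2 :=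
      log_le_of_pow 289 41 5 (by norm_num) (by norm_num) (by norm_num)
    nlinarith
  linarith

set_option maxHeartbeats 1000000 in
/-- Anti-concentration for i.i.d. Bernoulli(1/2) random variables (modeled as the
uniform distribution over `Fin k → Bool`): for `2 ≤ γ ≤ 2^{k/4}`, the sum exceeds
`k/2 + 0.1√(k·log γ)` with probability at least `0.1/γ`. -/
theorem bernoulli_upper_anti_concentration (k : ℕ) (hk : 100 ≤ k)
    (γ : ℝ) (hγ2 : 2 ≤ γ) (hγk : γ ≤ (2 : ℝ) ^ ((k : ℝ) / 4)) :
    0.1 / γ ≤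
      (Set.ncard {X : Fin k → Bool |
          (k : ℝ) / 2 + 0.1 * Real.sqrt ((k : ℝ) * Real.log γ) <
            ((Finset.univ.filter fun i => X i = true).card : ℝ)} : ℝ) / 2 ^ k := by
  have hγ0 : (0:ℝ) < γ := by linarith
  set t : ℝ := 0.1 * Real.sqrt ((k:ℝ) * Real.log γ) with ht
  have hl2l : (0.6931471803:ℝ) < Real.log 2 := Real.log_two_gt_d9
  have hl2u : Real.log 2 < 0.6931471808 := Real.log_two_lt_d9
  have hlogγ2 : Real.log 2 ≤ Real.log γ := Real.log_le_log (by norm_num) hγ2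
  have hlogγ0 : (0:ℝ) < Real.log γ := by linarith
  have hkr : (100:ℝ) ≤ (k:ℝ) := by exact_mod_cast hk
  have ht2 : t^2 = 0.01 * ((k:ℝ) * Real.log γ) := by
    rw [ht, mul_pow, Real.sq_sqrt (by positivity)]; norm_num
  have ht0 : 0 < t := by rw [ht]; positivity
  obtain ⟨n, hn⟩ : ∃ n : ℕ, n = Nat.floor t + 1 := ⟨_, rfl⟩
  have htn : t < n := by
    rw [hn]; push_cast; exact Nat.lt_floor_add_one t
  have hn1 : 1 ≤ n := by omega
  have htl : (n:ℝ) - 1 ≤ t := by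
    have h1 : (⌊t⌋₊ : ℝ) ≤ t := Nat.floor_le ht0.le
    rw [hn]; push_cast; linarith
  have hlogk : Real.log γ ≤ (k:ℝ)/4 * Real.log 2 := by
    calc Real.log γ ≤ Real.log ((2:ℝ) ^ ((k:ℝ)/4)) := Real.log_le_log hγ0 hγk
      _ = (k:ℝ)/4 * Real.log 2 := Real.log_rpow (by norm_num) _
  have htk : t ≤ 0.0417 * k := by
    nlinarith [ht2, hlogk, ht0, hkr, hl2u, sq_nonneg (t - 0.0417*k), sq_nonneg (t + 0.0417*k)]
  have hLk : (k:ℝ) * Real.log γ = 100 * t^2 := by linarith [ht2]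
  have hkn2 : (k:ℝ) * Real.log γ < 100 * (n:ℝ)^2 := by nlinarith [htn, ht0]
  have hmr : ((k:ℝ)-1)/2 ≤ ((k/2 : ℕ):ℝ) := by
    have h1 : k ≤ 2*(k/2)+1 := by omega
    have h2 : (k:ℝ) ≤ 2*((k/2:ℕ):ℝ)+1 := by exact_mod_cast h1
    linarith
  have hn14 : n = 1 ∨ n = 2 ∨ n = 3 ∨ 4 ≤ n := by omega
  rcases hn14 with hc | hc | hc | hc
  · subst hc
    norm_num at hkn2
    exact combin k 1 2 hk γ hγ0 (by norm_num) t htn (by push_cast; linarith)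
      (AI_case1 k γ hkr hγ0 hmr hlogγ2 hkn2)
  · subst hc
    norm_num at hkn2
    have htge1 : (1:ℝ) ≤ t := by push_cast at htl; linarith
    have hL100 : (100:ℝ) ≤ (k:ℝ) * Real.log γ := by nlinarith
    exact combin k 2 3 hk γ hγ0 (by norm_num) t htn (by push_cast; linarith)
      (AI_case2 k γ hkr hγ0 hmr hlogγ2 hkn2 hL100)
  · subst hc
    norm_num at hkn2
    have htge2 : (2:ℝ) ≤ t := by push_cast at htl; linarith
    have hL400 : (400:ℝ) ≤ (k:ℝ) * Real.log γ := by nlinarith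
    exact combin k 3 4 hk γ hγ0 (by norm_num) t htn (by push_cast; linarith)
      (AI_case3 k γ hkr hγ0 hmr hlogγ2 hkn2 hL400)
  · have hnr : (4:ℝ) ≤ (n:ℝ) := by exact_mod_cast hc
    have hLlb' : 100*((n:ℝ)-1)^2 ≤ (k:ℝ) * Real.log γ := by
      have h1 : ((n:ℝ)-1)^2 ≤ t^2 := by nlinarith
      nlinarith
    have hs3 : 3*(n:ℝ) ≤ 0.1551 * k := by linarith [htk, hkr]
    refine combin k n (2*n) hk γ hγ0 (by omega) t htn ?_
      (AI_case4 k n γ hkr hγ0 hlogγ2 hc hmr hnr hkn2 hLlb' hs3)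
    push_cast
    linarith
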